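/- Let x be a root of unity with x ≠ 1, let n ∈ ℤ, and let s ∈ ℂ satisfy 0 < |s − n| < 1. Then the series Σ_{m=0}^{∞} ((−1)^m Li_{m+1}(x) − Li_{m+1}(x^{−1})) (s − n)^m converges and Φ(s; x) = x^{−n} ( 1/(s − n) + Σ_{m=0}^{∞} ((−1)^m Li_{m+1}(x) − Li_{m+1}(x^{−1})) (s − n)^m ). -/

import Mathlib

open Filter Finset

/-- A complex number is a root of unity if some positive power of it equals 1. -/
def IsRootOfUnity (z : ℂ) : Prop := ∃ N : ℕ, 0 < N ∧ z ^ N = 1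

open scoped Classical in
/-- Partial sum `Σ_{0<n_1<⋯<n_r≤N} Π_j x_j^{n_j} (n_j + b_j − 1)^{−k_j}` where the list `K`
consists of the triples `(k_j, x_j, b_j)`. -/
noncomputable def cmhzP (K : List (ℕ × ℂ × ℂ)) (N : ℕ) : ℂ :=
  ∑ n ∈ Finset.univ.filter (fun n : Fin K.length → Fin N => StrictMono n),
    ∏ j : Fin K.length,
      (K.get j).2.1 ^ ((n j : ℕ) + 1) /
        ((((n j : ℕ) + 1 : ℕ) : ℂ) + (K.get j).2.2 - 1) ^ (K.get j).1

/-- Cyclotomic multiple Hurwitz zeta value: the limit of the partial sums `cmhzP`. -/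
noncomputable def cmhz (K : List (ℕ × ℂ × ℂ)) : ℂ := limUnder atTop (cmhzP K)

/-- Cyclotomic multiple zeta value (all Hurwitz parameters equal to 1). -/
noncomputable def cmzv (K : List (ℕ × ℂ)) : ℂ := cmhz (K.map fun p => (p.1, p.2, 1))

/-- Cyclotomic multiple t-value (all Hurwitz parameters equal to 1/2). -/
noncomputable def tval (K : List (ℕ × ℂ)) : ℂ := cmhz (K.map fun p => (p.1, p.2, (1 : ℂ)/2))

/-- Depth-one cyclotomic zeta value `Li_k(x)`. -/
noncomputable def li1 (k : ℕ) (x : ℂ) : ℂ := cmzv [(k, x)]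

/-- Depth-one cyclotomic Hurwitz zeta value `Li_k(x; b)`. -/
noncomputable def lih1 (k : ℕ) (x b : ℂ) : ℂ := cmhz [(k, x, b)]

/-- Depth-one cyclotomic t-value `t_k(x)`. -/
noncomputable def tval1 (k : ℕ) (x : ℂ) : ℂ := tval [(k, x)]

/-- The generalized digamma-type series `φ(s; x) = Σ_{k≥0} x^k/(k+s)`. -/
noncomputable def phiF (s x : ℂ) : ℂ :=
  limUnder atTop (fun N : ℕ => ∑ t ∈ Finset.range (N + 1), x ^ t / ((t : ℂ) + s))

/-- The extended trigonometric function `Φ(s; x) = φ(s; x) − φ(−s; x⁻¹) − 1/s`. -/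
noncomputable def PhiF (s x : ℂ) : ℂ := phiF s x - phiF (-s) x⁻¹ - 1 / s

/-!
For `‖x‖ = 1`, `x ≠ 1`, write `φ(s; x) = 1/s + Li₁(x) + Σ_{k ≥ 1} x^k (1/(k + s) - 1/k)`: the series
for `Li₁(x)` converges by Dirichlet's test, and the remaining series converges absolutely. For
`‖w‖ < 1`, expanding `1/(k + w) - 1/k = Σ_{m ≥ 1} (-w)^m / k^(m+1)` and exchanging the order of
summation turns the remainder into `Σ_{m ≥ 1} (-w)^m Li_{m+1}(x)`, which gives the expansion of
`Φ(w; x)` around `0`. Reindexing the partial sums shows `φ(s + 1; x) = x⁻¹ (φ(s; x) - 1/s)`, hence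
`Φ(s + 1; x) = x⁻¹ Φ(s; x)`, which moves the expansion from `0` to any integer `n`.
-/

open Topology

lemma IsRootOfUnity.norm_eq_one {x : ℂ} (hx : IsRootOfUnity x) : ‖x‖ = 1 :=
  let ⟨_, hN, h⟩ := hx
  Complex.norm_eq_one_of_pow_eq_one h hN.ne'

lemma cmhzP_singleton (k : ℕ) (x b : ℂ) (N : ℕ) :
    cmhzP [(k, x, b)] N = ∑ j ∈ range N, x ^ (j + 1) / ((j + 1 : ℂ) + b - 1) ^ k := by
  have hmono (n : Fin 1 → Fin N) : StrictMono n := Subsingleton.strictMono n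
  simp only [cmhzP, List.length_singleton, hmono, filter_true, ← Fin.sum_univ_eq_sum_range]
  exact Fintype.sum_equiv (Equiv.funUnique (Fin 1) (Fin N)) _ _ fun n => by simp

lemma li1_eq_limUnder (k : ℕ) (x : ℂ) :
    li1 k x = limUnder atTop fun N => ∑ j ∈ range N, x ^ (j + 1) / (j + 1 : ℂ) ^ k := by
  simp only [li1, cmzv, cmhz, List.map_cons, List.map_nil]
  congr 1
  funext N
  simp only [cmhzP_singleton, add_sub_cancel_right]

lemma norm_natCast_add_one (k : ℕ) : ‖(k + 1 : ℂ)‖ = k + 1 := by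
  norm_cast

lemma summable_one_div_succ_pow {k : ℕ} (hk : 2 ≤ k) :
    Summable fun j : ℕ => 1 / ((j : ℝ) + 1) ^ k := by
  simpa using (summable_nat_add_iff 1).mpr (Real.summable_one_div_nat_pow.mpr hk)

lemma norm_pow_succ_div_le {x : ℂ} (hx : ‖x‖ ≤ 1) {k : ℕ} (hk : 2 ≤ k) (j : ℕ) :
    ‖x ^ (j + 1) / (j + 1 : ℂ) ^ k‖ ≤ 1 / ((j : ℝ) + 1) ^ 2 := by
  have hj : (1 : ℝ) ≤ j + 1 := le_add_of_nonneg_left j.cast_nonneg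
  rw [norm_div, norm_pow, norm_pow, norm_natCast_add_one]
  gcongr
  exact pow_le_one₀ (norm_nonneg x) hx

lemma hasSum_li1 {k : ℕ} (hk : 2 ≤ k) {x : ℂ} (hx : ‖x‖ ≤ 1) :
    HasSum (fun j : ℕ => x ^ (j + 1) / (j + 1 : ℂ) ^ k) (li1 k x) := by
  have hsum : Summable fun j : ℕ => x ^ (j + 1) / (j + 1 : ℂ) ^ k :=
    .of_norm_bounded (summable_one_div_succ_pow le_rfl) (norm_pow_succ_div_le hx hk)
  rw [li1_eq_limUnder, hsum.hasSum.tendsto_sum_nat.limUnder_eq]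
  exact hsum.hasSum

lemma norm_geom_sum_succ_le {x : ℂ} (hx : ‖x‖ = 1) (hx1 : x ≠ 1) (N : ℕ) :
    ‖∑ j ∈ range N, x ^ (j + 1)‖ ≤ 2 / ‖x - 1‖ := by
  have hsum : ∑ j ∈ range N, x ^ (j + 1) = x * ((x ^ N - 1) / (x - 1)) := by
    rw [← geom_sum_eq hx1, mul_sum]
    simp_rw [pow_succ']
  have hnum : ‖x ^ N - 1‖ ≤ 2 := by
    calc ‖x ^ N - 1‖ ≤ ‖x ^ N‖ + ‖(1 : ℂ)‖ := norm_sub_le _ _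
    _ = 2 := by rw [norm_pow, hx]; norm_num
  rw [hsum, norm_mul, hx, one_mul, norm_div]
  gcongr

lemma tendsto_li1_one {x : ℂ} (hx : ‖x‖ = 1) (hx1 : x ≠ 1) :
    Tendsto (fun N => ∑ j ∈ range N, x ^ (j + 1) / (j + 1 : ℂ)) atTop (𝓝 (li1 1 x)) := by
  have hanti : Antitone fun j : ℕ => 1 / ((j : ℝ) + 1) := fun a b hab =>
    one_div_le_one_div_of_le (by positivity) (by exact_mod_cast Nat.add_le_add_right hab 1)
  have hcauchy := hanti.cauchySeq_series_mul_of_tendsto_zero_of_bounded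
    tendsto_one_div_add_atTop_nhds_zero_nat (norm_geom_sum_succ_le hx hx1)
  have hterm (j : ℕ) : (1 / ((j : ℝ) + 1)) • x ^ (j + 1) = x ^ (j + 1) / (j + 1 : ℂ) := by
    rw [Complex.real_smul]
    push_cast
    ring
  simp_rw [hterm] at hcauchy
  obtain ⟨L, hL⟩ := cauchySeq_tendsto_of_complete hcauchy
  simpa only [li1_eq_limUnder, pow_one, hL.limUnder_eq] using hL

lemma norm_one_div_add_sub_one_div_le {c s : ℂ} (hc : c ≠ 0) (hs : 2 * ‖s‖ ≤ ‖c‖) :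
    ‖1 / (c + s) - 1 / c‖ ≤ 2 * ‖s‖ / ‖c‖ ^ 2 := by
  have hc' : 0 < ‖c‖ := norm_pos_iff.mpr hc
  have hcs : ‖c‖ / 2 ≤ ‖c + s‖ := by
    have := norm_sub_norm_le c (-s)
    rw [sub_neg_eq_add, norm_neg] at this
    linarith
  have hcs0 : c + s ≠ 0 := norm_pos_iff.mp (by linarith)
  rw [div_sub_div _ _ hcs0 hc, norm_div, norm_mul]
  simp only [one_mul, mul_one, add_sub_cancel_left, norm_sub_rev c]
  calc ‖s‖ / (‖c + s‖ * ‖c‖) ≤ ‖s‖ / (‖c‖ / 2 * ‖c‖) := by gcongr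
    _ = 2 * ‖s‖ / ‖c‖ ^ 2 := by field_simp

noncomputable def phiTail (s x : ℂ) : ℂ :=
  ∑' k : ℕ, x ^ (k + 1) * (1 / ((k + 1 : ℂ) + s) - 1 / (k + 1 : ℂ))

lemma summable_phiTail {x : ℂ} (hx : ‖x‖ ≤ 1) (s : ℂ) :
    Summable fun k : ℕ => x ^ (k + 1) * (1 / ((k + 1 : ℂ) + s) - 1 / (k + 1 : ℂ)) := by
  refine .of_norm_bounded_eventually_nat
    ((summable_one_div_succ_pow le_rfl).mul_left (2 * ‖s‖)) ?_
  filter_upwards [eventually_ge_atTop ⌈2 * ‖s‖⌉₊] with k hk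
  have hk' : 2 * ‖s‖ ≤ ‖(k + 1 : ℂ)‖ := by
    rw [norm_natCast_add_one]
    linarith [Nat.ceil_le.mp hk]
  calc _ ≤ 1 * ‖1 / ((k + 1 : ℂ) + s) - 1 / (k + 1 : ℂ)‖ := by
        rw [norm_mul, norm_pow]
        gcongr
        exact pow_le_one₀ (norm_nonneg x) hx
    _ ≤ 2 * ‖s‖ / ‖(k + 1 : ℂ)‖ ^ 2 := by
        rw [one_mul]
        exact norm_one_div_add_sub_one_div_le (Nat.cast_add_one_ne_zero k) hk'
    _ = 2 * ‖s‖ * (1 / ((k : ℝ) + 1) ^ 2) := by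
        rw [norm_natCast_add_one]
        ring

lemma tendsto_phiF_partialSum {x : ℂ} (hx : ‖x‖ = 1) (hx1 : x ≠ 1) (s : ℂ) :
    Tendsto (fun N => ∑ t ∈ range (N + 1), x ^ t / ((t : ℂ) + s)) atTop
      (𝓝 (1 / s + li1 1 x + phiTail s x)) := by
  have hsplit (N : ℕ) : ∑ t ∈ range (N + 1), x ^ t / ((t : ℂ) + s) = 1 / s +
      ∑ j ∈ range N, x ^ (j + 1) / (j + 1 : ℂ) +
      ∑ j ∈ range N, x ^ (j + 1) * (1 / ((j + 1 : ℂ) + s) - 1 / (j + 1 : ℂ)) := by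
    rw [sum_range_succ', add_comm, add_assoc, ← sum_add_distrib]
    push_cast
    congr 1
    · simp
    · refine sum_congr rfl fun j _ => ?_
      ring
  simp_rw [hsplit]
  exact ((tendsto_li1_one hx hx1).const_add _).add
    (summable_phiTail hx.le s).hasSum.tendsto_sum_nat

lemma phiF_eq {x : ℂ} (hx : ‖x‖ = 1) (hx1 : x ≠ 1) (s : ℂ) :
    phiF s x = 1 / s + li1 1 x + phiTail s x :=
  (tendsto_phiF_partialSum hx hx1 s).limUnder_eq

lemma phiF_add_one {x : ℂ} (hx : ‖x‖ = 1) (hx1 : x ≠ 1) (s : ℂ) :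
    phiF (s + 1) x = x⁻¹ * (phiF s x - 1 / s) := by
  have hx0 : x ≠ 0 := ne_zero_of_norm_ne_zero (hx ▸ one_ne_zero)
  have hshift (N : ℕ) : ∑ t ∈ range (N + 1), x ^ t / ((t : ℂ) + (s + 1)) =
      x⁻¹ * (∑ t ∈ range (N + 1 + 1), x ^ t / ((t : ℂ) + s) - 1 / s) := by
    simp only [sum_range_succ' _ (N + 1), pow_zero, Nat.cast_zero, zero_add, add_sub_cancel_right,
      mul_sum]
    refine sum_congr rfl fun t _ => ?_
    push_cast
    field_simp
    ring
  have htendsto := (tendsto_phiF_partialSum hx hx1 s).comp (tendsto_add_atTop_nat 1)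
  rw [← phiF_eq hx hx1] at htendsto
  refine Tendsto.limUnder_eq ?_
  simp_rw [hshift]
  exact (htendsto.sub_const _).const_mul _

lemma PhiF_add_one {x : ℂ} (hx : ‖x‖ = 1) (hx1 : x ≠ 1) (s : ℂ) :
    PhiF (s + 1) x = x⁻¹ * PhiF s x := by
  have hx0 : x ≠ 0 := ne_zero_of_norm_ne_zero (hx ▸ one_ne_zero)
  have hinv := phiF_add_one (by rw [norm_inv, hx, inv_one]) (inv_ne_one.mpr hx1) (-(s + 1))
  rw [show -(s + 1) + 1 = -s by ring, inv_inv] at hinv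
  rw [PhiF, PhiF, phiF_add_one hx hx1, hinv, one_div_neg_eq_neg_one_div]
  field_simp
  ring

lemma PhiF_add_int {x : ℂ} (hx : ‖x‖ = 1) (hx1 : x ≠ 1) (w : ℂ) (n : ℤ) :
    PhiF (w + n) x = x ^ (-n) * PhiF w x := by
  have hx0 : x ≠ 0 := ne_zero_of_norm_ne_zero (hx ▸ one_ne_zero)
  have hstep (k : ℤ) : x ^ (k + 1) * PhiF (w + ↑(k + 1)) x = x ^ k * PhiF (w + k) x := by
    rw [Int.cast_add, Int.cast_one, ← add_assoc, PhiF_add_one hx hx1, zpow_add_one₀ hx0]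
    field_simp
  suffices h : x ^ n * PhiF (w + n) x = PhiF w x by
    rw [← h, zpow_neg, inv_mul_cancel_left₀ (zpow_ne_zero n hx0)]
  induction n using Int.induction_on with
  | zero => simp
  | succ k ih => rw [hstep, ih]
  | pred k ih => rw [← hstep, sub_add_cancel, ih]

lemma hasSum_neg_pow_div_pow {c w : ℂ} (hw : ‖w‖ < ‖c‖) :
    HasSum (fun m : ℕ => (-w) ^ (m + 1) / c ^ (m + 2)) (1 / (c + w) - 1 / c) := by
  have hc : c ≠ 0 := norm_pos_iff.mp ((norm_nonneg w).trans_lt hw)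
  have hcw : c + w ≠ 0 := by
    have := norm_sub_norm_le c (-w)
    rw [sub_neg_eq_add, norm_neg] at this
    exact norm_pos_iff.mp (by linarith)
  have hξ : ‖-w / c‖ < 1 := by
    rwa [norm_div, norm_neg, div_lt_one (norm_pos_iff.mpr hc)]
  have hsum : -w / c ^ 2 * (1 - -w / c)⁻¹ = 1 / (c + w) - 1 / c := by
    rw [neg_div c w, sub_neg_eq_add, one_add_div hc, inv_div]
    field_simp
    ring
  exact hsum ▸ ((hasSum_geometric_of_norm_lt_one hξ).mul_left _).congr_fun fun m => by ring

lemma hasSum_phiTail {x w : ℂ} (hx : ‖x‖ ≤ 1) (hw : ‖w‖ < 1) :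
    HasSum (fun m : ℕ => (-w) ^ (m + 1) * li1 (m + 2) x) (phiTail w x) := by
  set F : ℕ × ℕ → ℂ := fun p => x ^ (p.1 + 1) * ((-w) ^ (p.2 + 1) / (p.1 + 1 : ℂ) ^ (p.2 + 2))
  have hF : Summable F := by
    refine .of_norm_bounded ((summable_one_div_succ_pow le_rfl).mul_of_nonneg
      (summable_geometric_of_lt_one (norm_nonneg w) hw) (fun _ => by positivity)
      fun _ => by positivity) fun p => ?_
    calc ‖F p‖ = ‖x ^ (p.1 + 1) / (p.1 + 1 : ℂ) ^ (p.2 + 2)‖ * ‖w‖ ^ (p.2 + 1) := by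
          rw [← norm_neg w, ← norm_pow, ← norm_mul]
          congr 1
          ring
      _ ≤ 1 / ((p.1 : ℝ) + 1) ^ 2 * ‖w‖ ^ p.2 :=
          mul_le_mul (norm_pow_succ_div_le hx (by omega) p.1)
            (pow_le_pow_of_le_one (norm_nonneg w) hw.le p.2.le_succ) (by positivity)
            (by positivity)
  have hrows : HasSum (fun k : ℕ => x ^ (k + 1) * (1 / ((k + 1 : ℂ) + w) - 1 / (k + 1 : ℂ)))
      (∑' p, F p) := by
    refine hF.hasSum.prod_fiberwise fun k => ?_
    have hk : ‖w‖ < ‖(k + 1 : ℂ)‖ := by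
      rw [norm_natCast_add_one]
      linarith [(k.cast_nonneg : (0 : ℝ) ≤ k)]
    exact (hasSum_neg_pow_div_pow hk).mul_left (x ^ (k + 1))
  have hcols : HasSum (fun m : ℕ => (-w) ^ (m + 1) * li1 (m + 2) x) (∑' p, F p) :=
    ((Equiv.prodComm ℕ ℕ).hasSum_iff.mpr hF.hasSum).prod_fiberwise fun m =>
      ((hasSum_li1 (by omega) hx).mul_left ((-w) ^ (m + 1))).congr_fun fun k => by
        simp only [F, Function.comp_apply, Equiv.prodComm_apply, Prod.fst_swap, Prod.snd_swap]
        ring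
  rwa [phiTail, hrows.tsum_eq]

lemma hasSum_PhiF_sub_one_div {x w : ℂ} (hx : ‖x‖ = 1) (hx1 : x ≠ 1) (hw : ‖w‖ < 1) :
    HasSum (fun m : ℕ => ((-1 : ℂ) ^ m * li1 (m + 1) x - li1 (m + 1) x⁻¹) * w ^ m)
      (PhiF w x - 1 / w) := by
  have hx' : ‖x⁻¹‖ = 1 := by rw [norm_inv, hx, inv_one]
  have htail := (hasSum_phiTail hx.le hw).sub (hasSum_phiTail hx'.le (w := -w) (by rwa [norm_neg]))
  have hval : PhiF w x - 1 / w - (li1 1 x - li1 1 x⁻¹) = phiTail w x - phiTail (-w) x⁻¹ := by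
    rw [PhiF, phiF_eq hx hx1, phiF_eq hx' (inv_ne_one.mpr hx1), one_div_neg_eq_neg_one_div]
    ring
  refine (hasSum_nat_add_iff' 1).mp ?_
  rw [sum_range_one, pow_zero, pow_zero, one_mul, mul_one, zero_add, hval]
  exact htail.congr_fun fun m => by
    rw [neg_neg, neg_pow w]
    ring

theorem PhiF_laurent_expansion_at_int_general (x : ℂ) (hx : IsRootOfUnity x) (hx1 : x ≠ 1)
    (n : ℤ) (s : ℂ) (h2 : ‖s - (n : ℂ)‖ < 1) :
    Summable (fun m : ℕ =>
      ((-1 : ℂ) ^ m * li1 (m + 1) x - li1 (m + 1) x⁻¹) * (s - (n : ℂ)) ^ m) ∧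
    PhiF s x = x ^ (-n) *
      (1 / (s - (n : ℂ)) + ∑' m : ℕ,
        ((-1 : ℂ) ^ m * li1 (m + 1) x - li1 (m + 1) x⁻¹) * (s - (n : ℂ)) ^ m) := by
  have hexp := hasSum_PhiF_sub_one_div hx.norm_eq_one hx1 h2
  refine ⟨hexp.summable, ?_⟩
  rw [hexp.tsum_eq, add_sub_cancel, ← PhiF_add_int hx.norm_eq_one hx1, sub_add_cancel]

/-- Laurent expansion of `Φ(s; x)` around an integer `n` (Lemma `lem-rui-xu-one`). -/
theorem PhiF_laurent_expansion_at_int (x : ℂ) (hx : IsRootOfUnity x) (hx1 : x ≠ 1)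
    (n : ℤ) (s : ℂ) (h1 : 0 < ‖s - (n : ℂ)‖) (h2 : ‖s - (n : ℂ)‖ < 1) :
    Summable (fun m : ℕ =>
      ((-1 : ℂ) ^ m * li1 (m + 1) x - li1 (m + 1) x⁻¹) * (s - (n : ℂ)) ^ m) ∧
    PhiF s x = x ^ (-n) *
      (1 / (s - (n : ℂ)) + ∑' m : ℕ,
        ((-1 : ℂ) ^ m * li1 (m + 1) x - li1 (m + 1) x⁻¹) * (s - (n : ℂ)) ^ m) :=
  PhiF_laurent_expansion_at_int_general x hx hx1 n s h2
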